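/- Assume Setup: C k-linear Hom-finite triangulated with split idempotents, n = 2d even, t a 2d-cluster tilting object with T = add(t), and S ⊆ C a d-cluster tilting subcategory with Σ^d S = S and t ∈ S, so S is a (d+2)-angulated category with d-suspension Σ^d and t is an Oppermann–Thomas cluster tilting object in S. Then for every s ∈ S, the (d+2)-angulated index index^⬠_T(s) = Σ_{i=0}^d (−1)^i [t_i] (computed from a (d+2)-angle t_d → ⋯ → t_0 → s → Σ^d t_d with t_i ∈ T and radical maps) equals the triangulated index index_T(s) computed in C. -/

import Mathlib

open CategoryTheory Category Limits Pretriangulated Opposite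

universe v u

section Defs

variable {C : Type u} [Category.{v} C]

section Add

variable [Preadditive C] [HasFiniteBiproducts C]

/-- `x` lies in `add t`: it is a direct summand of a finite direct sum of copies of `t`. -/
def inAdd (t x : C) : Prop :=
  ∃ (n : ℕ) (i : x ⟶ ⨁ (fun _ : Fin n => t)) (r : ⨁ (fun _ : Fin n => t) ⟶ x),
    i ≫ r = 𝟙 x

end Add

/-- A morphism lies in the radical of the category. -/
def radMor [Preadditive C] {x y : C} (f : x ⟶ y) : Prop :=
  ∀ g : y ⟶ x, IsIso (𝟙 x - f ≫ g)

/-- An object is indecomposable. -/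
def IndecObj [Preadditive C] [HasBinaryBiproducts C] (s : C) : Prop :=
  ¬ IsZero s ∧ ∀ (a b : C), (s ≅ a ⊞ b) → IsZero a ∨ IsZero b

/-- Every object has a precover by an object of `Tset` (contravariant finiteness). -/
def IsPrecovering (Tset : Set C) : Prop :=
  ∀ c : C, ∃ (x : C) (f : x ⟶ c), x ∈ Tset ∧
    ∀ x' ∈ Tset, ∀ g : x' ⟶ c, ∃ h : x' ⟶ x, h ≫ f = g

/-- Every object has a preenvelope by an object of `Tset` (covariant finiteness). -/
def IsPreenveloping (Tset : Set C) : Prop :=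
  ∀ c : C, ∃ (x : C) (f : c ⟶ x), x ∈ Tset ∧
    ∀ x' ∈ Tset, ∀ g : c ⟶ x', ∃ h : x ⟶ x', f ≫ h = g

/-- `f : x ⟶ c` is a `Tset`-cover: a right minimal `Tset`-approximation. -/
def IsTCover (Tset : Set C) {x c : C} (f : x ⟶ c) : Prop :=
  x ∈ Tset ∧ (∀ x' ∈ Tset, ∀ g : x' ⟶ c, ∃ h : x' ⟶ x, h ≫ f = g) ∧
    ∀ φ : x ⟶ x, φ ≫ f = f → IsIso φ

section Shift

variable [Preadditive C] [HasShift C ℤ]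

/-- `Tset` is an `n`-cluster tilting subcategory: it is functorially finite and coincides with
both `Ext^{1..n-1}`-orthogonals of itself. -/
structure IsClusterTiltingSub (n : ℕ) (Tset : Set C) : Prop where
  precovering : IsPrecovering Tset
  preenveloping : IsPreenveloping Tset
  mem_iff_ext₁ : ∀ c : C, c ∈ Tset ↔
    ∀ i : ℕ, 1 ≤ i → i ≤ n - 1 → ∀ x ∈ Tset, ∀ f : x ⟶ c⟦(i : ℤ)⟧, f = 0
  mem_iff_ext₂ : ∀ c : C, c ∈ Tset ↔
    ∀ i : ℕ, 1 ≤ i → i ≤ n - 1 → ∀ x ∈ Tset, ∀ f : c ⟶ x⟦(i : ℤ)⟧, f = 0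

/-- `t` is an `n`-cluster tilting object: `add t` is an `n`-cluster tilting subcategory. -/
def IsClusterTiltingObj [HasFiniteBiproducts C] (n : ℕ) (t : C) : Prop :=
  IsClusterTiltingSub n {x : C | inAdd t x}

end Shift

section Tri

variable [Preadditive C] [HasZeroObject C] [HasShift C ℤ]
  [∀ n : ℤ, (shiftFunctor C n).Additive] [Pretriangulated C]

/-- The Iyama–Yoshino star operation `X * Y` on full subcategories. -/
def star (X Y : Set C) : Set C :=
  {c | ∃ (x y : C) (f : x ⟶ c) (g : c ⟶ y) (h : y ⟶ x⟦(1 : ℤ)⟧),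
    Triangle.mk f g h ∈ (distTriang C) ∧ x ∈ X ∧ y ∈ Y}

/-- Iterated star operation `X₁ * X₂ * ⋯ * Xₘ`. -/
def starList : List (Set C) → Set C
  | [] => {c | IsZero c}
  | [X] => X
  | X :: Y :: L => star X (starList (Y :: L))

/-- A tower of triangles connecting the objects `cobj (m+1), cobj m, …, cobj 1, cobj 0`:
triangles `w (i+1) ⟶ cobj (i+1) ⟶ w i ⟶ (w (i+1))⟦1⟧` for `i < m`, with
`w 0 = cobj 0` and `w m = cobj (m+1)`. -/
structure TriTower (m : ℕ) (cobj : ℕ → C) where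
  w : ℕ → C
  fmor : ∀ i : ℕ, w (i + 1) ⟶ cobj (i + 1)
  gmor : ∀ i : ℕ, cobj (i + 1) ⟶ w i
  hmor : ∀ i : ℕ, w i ⟶ (w (i + 1))⟦(1 : ℤ)⟧
  mem : ∀ i < m, Triangle.mk (fmor i) (gmor i) (hmor i) ∈ distTriang C
  w_zero : w 0 = cobj 0
  w_top : w m = cobj (m + 1)

/-- The composite `w 0 ⟶ Σʲ (w j)` of the (suitably shifted) wavy morphisms of a tower. -/
noncomputable def towerComp {m : ℕ} {cobj : ℕ → C} (tw : TriTower m cobj) :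
    ∀ j : ℕ, (tw.w 0 ⟶ (tw.w j)⟦(j : ℤ)⟧)
  | 0 => (shiftFunctorZero' C ((0 : ℕ) : ℤ) (by simp)).inv.app (tw.w 0)
  | (j + 1) => towerComp tw j ≫ (shiftFunctor C (j : ℤ)).map (tw.hmor j) ≫
      (shiftFunctorAdd' C (1 : ℤ) (j : ℤ) ((j + 1 : ℕ) : ℤ) (by push_cast; ring)).inv.app
        (tw.w (j + 1))

/-- The full composite `cobj 0 ⟶ Σᵐ (cobj (m+1))` of the wavy morphisms of a tower. -/
noncomputable def towerGamma {m : ℕ} {cobj : ℕ → C} (tw : TriTower m cobj) :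
    cobj 0 ⟶ (cobj (m + 1))⟦(m : ℤ)⟧ :=
  eqToHom tw.w_zero.symm ≫ towerComp tw m ≫ eqToHom (by rw [tw.w_top])

/-- `cls` is constant on isomorphism classes of objects of `Tset` and additive on biproducts
of objects of `Tset`; quantifying over all such `cls` encodes identities in the split
Grothendieck group `K₀^{sp}(Tset)`. -/
def IsAddOn [HasFiniteBiproducts C] (Tset : Set C) {G : Type*} [AddCommGroup G]
    (cls : C → G) : Prop :=
  (∀ x y : C, x ∈ Tset → y ∈ Tset → Nonempty (x ≅ y) → cls x = cls y) ∧
  (∀ x y : C, x ∈ Tset → y ∈ Tset → cls (x ⊞ y) = cls x + cls y)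

/-- `ind` is the triangulated index with respect to `Tset`: for each `c` there is a tower of
triangles built from `Tset`-covers, and `ind c` is the alternating sum of the classes of its
`Tset`-objects. -/
def IsIndex [HasFiniteBiproducts C] (n : ℕ) (Tset : Set C) {G : Type*} [AddCommGroup G]
    (cls ind : C → G) : Prop :=
  ∀ c : C, ∃ (cobj : ℕ → C) (tw : TriTower (n - 1) cobj),
    cobj 0 = c ∧ (∀ i < n - 1, IsTCover Tset (tw.gmor i)) ∧ cobj n ∈ Tset ∧
    ind c = ∑ i ∈ Finset.range n, ((-1 : ℤ) ^ i) • cls (cobj (i + 1))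

/-- `ind` is the `(d+2)`-angulated index with respect to `Tset`: for each `s ∈ Sset` there is a
`(d+2)`-angle (encoded as a tower of triangles) `t_d → ⋯ → t_0 → s → Σ^d t_d` with `t_i ∈ Tset`
and radical maps, and `ind s` is the alternating sum of the classes of the `t_i`. -/
def IsHigherIndex [HasFiniteBiproducts C] (d : ℕ) (Tset Sset : Set C) {G : Type*}
    [AddCommGroup G] (cls ind : C → G) : Prop :=
  ∀ s ∈ Sset, ∃ (cobj : ℕ → C) (tw : TriTower d cobj),
    cobj 0 = s ∧ (∀ i, 1 ≤ i → i ≤ d + 1 → cobj i ∈ Tset) ∧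
    (∀ j : ℕ, j + 2 ≤ d → radMor (tw.gmor (j + 1) ≫ tw.fmor j)) ∧
    (∀ j : ℕ, (hj : j + 1 = d) →
      radMor ((eqToHom (show cobj (d + 1) = tw.w (j + 1) by rw [hj, tw.w_top]) :
        cobj (d + 1) ⟶ tw.w (j + 1)) ≫ tw.fmor j)) ∧
    ind s = ∑ i ∈ Finset.range (d + 1), ((-1 : ℤ) ^ i) • cls (cobj (i + 1))

/-- `t` is an Oppermann–Thomas cluster tilting object of the `(d+2)`-angulated category `Sset`:
`Hom(t, Σ^d t) = 0`, and every `s ∈ Sset` admits a `(d+2)`-angle (encoded as a tower)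
`t_d → ⋯ → t_0 → s → Σ^d t_d` with all `t_i ∈ add t`. -/
def IsOTClusterTilting [HasFiniteBiproducts C] (d : ℕ) (Sset : Set C) (t : C) : Prop :=
  t ∈ Sset ∧ (∀ f : t ⟶ t⟦(d : ℤ)⟧, f = 0) ∧
    ∀ s ∈ Sset, ∃ (cobj : ℕ → C) (tw : TriTower d cobj),
      cobj 0 = s ∧ ∀ i, 1 ≤ i → i ≤ d + 1 → inAdd t (cobj i)

/-- A `N`-Calabi–Yau structure on `Sset`: a bifunctorial perfect pairing
`Hom(x,y) × Hom(y, x⟦N⟧) → k`, encoding natural isomorphisms `Hom(x,y) ≅ D Hom(y, x⟦N⟧)`. -/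
structure CYData (k : Type*) [Field k] [Linear k C] (Sset : Set C) (N : ℤ) where
  pair : ∀ x y : C, (x ⟶ y) → (y ⟶ x⟦N⟧) → k
  add_left : ∀ x y, x ∈ Sset → y ∈ Sset → ∀ (f f' : x ⟶ y) (g : y ⟶ x⟦N⟧),
    pair x y (f + f') g = pair x y f g + pair x y f' g
  add_right : ∀ x y, x ∈ Sset → y ∈ Sset → ∀ (f : x ⟶ y) (g g' : y ⟶ x⟦N⟧),
    pair x y f (g + g') = pair x y f g + pair x y f g'
  smul_left : ∀ x y, x ∈ Sset → y ∈ Sset → ∀ (a : k) (f : x ⟶ y) (g : y ⟶ x⟦N⟧),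
    pair x y (a • f) g = a * pair x y f g
  smul_right : ∀ x y, x ∈ Sset → y ∈ Sset → ∀ (a : k) (f : x ⟶ y) (g : y ⟶ x⟦N⟧),
    pair x y f (a • g) = a * pair x y f g
  assoc : ∀ x y z, x ∈ Sset → y ∈ Sset → z ∈ Sset →
    ∀ (f : x ⟶ y) (g : y ⟶ z) (h : z ⟶ x⟦N⟧),
    pair x z (f ≫ g) h = pair x y f (g ≫ h)
  nondeg_left : ∀ x y, x ∈ Sset → y ∈ Sset → ∀ f : x ⟶ y,
    (∀ g : y ⟶ x⟦N⟧, pair x y f g = 0) → f = 0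
  nondeg_right : ∀ x y, x ∈ Sset → y ∈ Sset → ∀ g : y ⟶ x⟦N⟧,
    (∀ f : x ⟶ y, pair x y f g = 0) → g = 0

end Tri

end Defs

/-!
The tower of triangles of a `(d+2)`-angle `t_d → ⋯ → t_0 → s → Σ^d t_d` has cones `w_j`
with `w_d = t_d ∈ add t`. Since `add t` is `2d`-cluster tilting, descending induction along the
tower gives `Hom(add t, Σ^m w_j) = 0` for `1 ≤ m ≤ d - 1 + j`; hence every `t_j → w_{j-1}` is an
`add t`-approximation, and it is right minimal because the maps of the angle are radical.
Minimal approximations are unique up to isomorphism, so the tower defining `index_T(s)` agrees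
with that of the angle up to step `d`. There it reaches an object of `add t`, after which it
continues with an isomorphism and then only zero objects, which do not contribute to the
alternating sum.
-/

lemma sum_range_eq_sum_range_of_eq_zero {M : Type*} [AddCommMonoid M] {f g : ℕ → M} {n N : ℕ}
    (hnN : n ≤ N) (hfg : ∀ i < n, f i = g i) (hg : ∀ i, n ≤ i → i < N → g i = 0) :
    ∑ i ∈ Finset.range n, f i = ∑ i ∈ Finset.range N, g i := by
  rw [← Finset.sum_range_add_sum_Ico _ hnN,
    Finset.sum_eq_zero fun i hi => hg i (Finset.mem_Ico.1 hi).1 (Finset.mem_Ico.1 hi).2, add_zero]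
  exact Finset.sum_congr rfl fun i hi => hfg i (Finset.mem_range.1 hi)

variable {C : Type u} [Category.{v} C]

section Preadditive

variable [Preadditive C]

lemma radMor.isIso_id_sub_comp_left {x y : C} {f : x ⟶ y} (hf : radMor f) (g : y ⟶ x) :
    IsIso (𝟙 y - g ≫ f) := by
  have := hf g
  set c := inv (𝟙 x - f ≫ g)
  have hr : f ≫ g ≫ c = c - 𝟙 x := by
    have := IsIso.hom_inv_id (𝟙 x - f ≫ g)
    rw [Preadditive.sub_comp, id_comp, assoc] at this
    rw [← this]; abel
  have hl : c ≫ f ≫ g = c - 𝟙 x := by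
    have := IsIso.inv_hom_id (𝟙 x - f ≫ g)
    rw [Preadditive.comp_sub, comp_id] at this
    rw [← this]; abel
  -- Jacobson's trick: `(𝟙 - g ≫ f)⁻¹ = 𝟙 + g ≫ (𝟙 - f ≫ g)⁻¹ ≫ f`.
  refine ⟨𝟙 y + g ≫ c ≫ f, ?_, ?_⟩
  · simp only [Preadditive.sub_comp, Preadditive.comp_add, id_comp, comp_id, assoc, reassoc_of% hr,
      Preadditive.comp_sub]
    abel
  · simp only [Preadditive.comp_sub, Preadditive.add_comp, id_comp, comp_id, assoc, reassoc_of% hl,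
      Preadditive.sub_comp]
    abel

lemma inAdd_of_isZero [HasFiniteBiproducts C] {t x : C} (hx : IsZero x) : inAdd t x :=
  ⟨0, 0, 0, hx.eq_of_src _ _⟩

lemma IsClusterTiltingSub.hom_shift_eq_zero [HasShift C ℤ] {n : ℕ} {Tset : Set C}
    (h : IsClusterTiltingSub n Tset) {c x : C} (hc : c ∈ Tset) (hx : x ∈ Tset)
    {m : ℤ} (hm₁ : 1 ≤ m) (hm₂ : m ≤ n - 1) (f : x ⟶ c⟦m⟧) : f = 0 := by
  lift m to ℕ using by omega
  exact (h.mem_iff_ext₁ c).1 hc m (by omega) (by omega) x hx f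

end Preadditive

namespace IsTCover

variable {Tset : Set C}

lemma comp_iso {x c c' : C} {f : x ⟶ c} (hf : IsTCover Tset f) (e : c ≅ c') :
    IsTCover Tset (f ≫ e.hom) := by
  obtain ⟨hx, happrox, hmin⟩ := hf
  refine ⟨hx, fun x' hx' g => ?_, fun φ hφ => hmin φ ?_⟩
  · obtain ⟨h, hh⟩ := happrox x' hx' (g ≫ e.inv)
    exact ⟨h, by simp [reassoc_of% hh]⟩
  · simpa using hφ =≫ e.inv

lemma id_of_mem {x : C} (hx : x ∈ Tset) : IsTCover Tset (𝟙 x) :=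
  ⟨hx, fun _ _ g => ⟨g, comp_id g⟩, fun φ hφ => by rw [comp_id] at hφ; rw [hφ]; infer_instance⟩

lemma exists_iso {x x' c : C} {f : x ⟶ c} {f' : x' ⟶ c}
    (hf : IsTCover Tset f) (hf' : IsTCover Tset f') : ∃ e : x ≅ x', e.hom ≫ f' = f := by
  obtain ⟨hx, happrox, hmin⟩ := hf
  obtain ⟨hx', happrox', hmin'⟩ := hf'
  obtain ⟨h, hh⟩ := happrox' x hx f
  obtain ⟨h', hh'⟩ := happrox x' hx' f'
  have : IsIso (h ≫ h') := hmin _ (by rw [assoc, hh', hh])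
  have : IsIso (h' ≫ h) := hmin' _ (by rw [assoc, hh, hh'])
  have : IsSplitMono h := IsSplitMono.mk' ⟨h' ≫ inv (h ≫ h'), by rw [← assoc, IsIso.hom_inv_id]⟩
  have : IsSplitEpi h := IsSplitEpi.mk' ⟨inv (h' ≫ h) ≫ h', by rw [assoc, IsIso.inv_hom_id]⟩
  have : IsIso h := isIso_of_mono_of_isSplitEpi h
  exact ⟨asIso h, hh⟩

lemma exists_iso_of_iso {x x' c c' : C} {f : x ⟶ c} {f' : x' ⟶ c'}
    (hf : IsTCover Tset f) (hf' : IsTCover Tset f') (e : c ≅ c') :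
    ∃ h : x ≅ x', h.hom ≫ f' = f ≫ e.hom :=
  exists_iso (hf.comp_iso e) hf'

lemma isIso_of_iso_mem {x c c' : C} {f : x ⟶ c} (hf : IsTCover Tset f) (e : c ≅ c')
    (hc' : c' ∈ Tset) : IsIso f := by
  obtain ⟨h, hh⟩ := exists_iso (hf.comp_iso e) (id_of_mem hc')
  rw [comp_id, ← Iso.comp_inv_eq] at hh
  rw [← hh]
  infer_instance

lemma isZero_of_isZero [HasZeroMorphisms C] {x c : C} {f : x ⟶ c} (hf : IsTCover Tset f)
    (hc : IsZero c) : IsZero x := by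
  have : IsIso (0 : x ⟶ x) := hf.2.2 0 (hc.eq_of_tgt _ _)
  exact IsZero.of_mono_zero x x

end IsTCover

section Pretriangulated

variable [Preadditive C] [HasZeroObject C] [HasShift C ℤ]
  [∀ n : ℤ, (shiftFunctor C n).Additive] [Pretriangulated C]

lemma hom_shift_obj₃_eq_zero_of_distTriang {T : Triangle C} (hT : T ∈ distTriang C) {X : C}
    (m : ℤ) (h₂ : ∀ f : X ⟶ T.obj₂⟦m⟧, f = 0) (h₁ : ∀ f : X ⟶ T.obj₁⟦m + 1⟧, f = 0)
    (f : X ⟶ T.obj₃⟦m⟧) : f = 0 := by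
  obtain ⟨g, rfl⟩ := Triangle.coyoneda_exact₃ _ (Triangle.shift_distinguished T hT m) f
    ((cancel_mono ((shiftFunctorAdd' C m 1 (m + 1) rfl).inv.app T.obj₁)).1
      ((h₁ _).trans zero_comp.symm))
  rw [h₂ g]
  exact zero_comp

lemma nonempty_iso_obj₁_of_distTriang {T₁ T₂ : Triangle C} (hT₁ : T₁ ∈ distTriang C)
    (hT₂ : T₂ ∈ distTriang C) (b : T₁.obj₂ ≅ T₂.obj₂) (c : T₁.obj₃ ≅ T₂.obj₃)
    (comm : T₁.mor₂ ≫ c.hom = b.hom ≫ T₂.mor₂) : Nonempty (T₁.obj₁ ≅ T₂.obj₁) := by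
  obtain ⟨a, ha₁, ha₃⟩ :=
    complete_distinguished_triangle_morphism₁ T₁ T₂ hT₁ hT₂ b.hom c.hom comm
  have : IsIso a := isIso₁_of_isIso₂₃ (Triangle.homMk T₁ T₂ a b.hom c.hom ha₁ comm ha₃) hT₁ hT₂
    (inferInstanceAs (IsIso b.hom)) (inferInstanceAs (IsIso c.hom))
  exact ⟨asIso a⟩

lemma IsAddOn.eq_zero_of_isZero [HasFiniteBiproducts C] {Tset : Set C} {G : Type*}
    [AddCommGroup G] {cls : C → G} (hcls : IsAddOn Tset cls) (hz : ∀ z : C, IsZero z → z ∈ Tset)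
    {x : C} (hx : IsZero x) : cls x = 0 := by
  have hxx : IsZero (x ⊞ x) := by
    rw [IsZero.iff_id_eq_zero]
    ext <;> exact hx.eq_of_tgt _ _
  have h₁ : cls (x ⊞ x) = cls x := hcls.1 _ _ (hz _ hxx) (hz _ hx) ⟨hxx.iso hx⟩
  have h₂ : cls (x ⊞ x) = cls x + cls x := hcls.2 _ _ (hz _ hx) (hz _ hx)
  exact left_eq_add.mp (h₁.symm.trans h₂)

lemma isTCover_of_distTriang {Tset : Set C} {A B D : C} {f : A ⟶ B} {g : B ⟶ D}
    {h : D ⟶ A⟦(1 : ℤ)⟧} (hT : Triangle.mk f g h ∈ distTriang C) (hB : B ∈ Tset)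
    (hh : ∀ x ∈ Tset, ∀ u : x ⟶ D, u ≫ h = 0) (hf : ∀ u : B ⟶ A, IsIso (𝟙 B - u ≫ f)) :
    IsTCover Tset g := by
  refine ⟨hB, fun x hx u => ?_, fun φ hφ => ?_⟩
  · obtain ⟨v, hv⟩ := Triangle.coyoneda_exact₃ _ hT u (hh x hx u)
    exact ⟨v, hv.symm⟩
  · obtain ⟨u, hu⟩ := Triangle.coyoneda_exact₂ _ hT (𝟙 B - φ)
      (show (𝟙 B - φ) ≫ g = 0 by rw [Preadditive.sub_comp, id_comp, hφ, sub_self])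
    have hφu : φ = 𝟙 B - u ≫ f := by rw [← show 𝟙 B - φ = u ≫ f from hu, sub_sub_cancel]
    exact hφu ▸ hf u

namespace TriTower

variable {Tset : Set C}

lemma nonempty_iso_w {m₁ m₂ n : ℕ} {c₁ c₂ : ℕ → C} (tw₁ : TriTower m₁ c₁)
    (tw₂ : TriTower m₂ c₂) (h0 : c₁ 0 = c₂ 0) (h₁ : n ≤ m₁) (h₂ : n ≤ m₂)
    (hc₁ : ∀ i < n, IsTCover Tset (tw₁.gmor i)) (hc₂ : ∀ i < n, IsTCover Tset (tw₂.gmor i))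
    {j : ℕ} (hj : j ≤ n) : Nonempty (tw₁.w j ≅ tw₂.w j) := by
  induction j with
  | zero => exact ⟨eqToIso (tw₁.w_zero.trans (h0.trans tw₂.w_zero.symm))⟩
  | succ j ih =>
    obtain ⟨e⟩ := ih (by omega)
    obtain ⟨h, hh⟩ := (hc₁ j hj).exists_iso_of_iso (hc₂ j hj) e
    exact nonempty_iso_obj₁_of_distTriang (tw₁.mem j (by omega)) (tw₂.mem j (by omega)) h e hh.symm

lemma nonempty_iso_cobj {m₁ m₂ n : ℕ} {c₁ c₂ : ℕ → C} (tw₁ : TriTower m₁ c₁)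
    (tw₂ : TriTower m₂ c₂) (h0 : c₁ 0 = c₂ 0) (h₁ : n ≤ m₁) (h₂ : n ≤ m₂)
    (hc₁ : ∀ i < n, IsTCover Tset (tw₁.gmor i)) (hc₂ : ∀ i < n, IsTCover Tset (tw₂.gmor i))
    {i : ℕ} (hi : i < n) : Nonempty (c₁ (i + 1) ≅ c₂ (i + 1)) := by
  obtain ⟨e⟩ := tw₁.nonempty_iso_w tw₂ h0 h₁ h₂ hc₁ hc₂ hi.le
  obtain ⟨h, -⟩ := (hc₁ i hi).exists_iso_of_iso (hc₂ i hi) e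
  exact ⟨h⟩

section Tail

variable {m : ℕ} {c : ℕ → C} (tw : TriTower m c)

lemma isZero_cobj_succ {k : ℕ} (hk : k ≤ m) (hc : k < m → IsTCover Tset (tw.gmor k))
    (hw : IsZero (tw.w k)) : IsZero (c (k + 1)) := by
  rcases hk.lt_or_eq with hk | rfl
  · exact (hc hk).isZero_of_isZero hw
  · exact tw.w_top ▸ hw

lemma isZero_w_of_le {j k : ℕ} (hc : ∀ i < m, IsTCover Tset (tw.gmor i)) (hjk : j ≤ k)
    (hkm : k ≤ m) (hw : IsZero (tw.w j)) : IsZero (tw.w k) := by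
  induction k, hjk using Nat.le_induction with
  | base => exact hw
  | succ k _ ih =>
    exact Triangle.isZero₁_of_isZero₂₃ _ (tw.mem k (by omega))
      (tw.isZero_cobj_succ (by omega) (fun hk => hc k hk) (ih (by omega))) (ih (by omega))

lemma nonempty_iso_cobj_succ_of_w_mem (hc : ∀ i < m, IsTCover Tset (tw.gmor i)) {j : ℕ}
    (hj : j ≤ m) {x : C} (e : tw.w j ≅ x) (hx : x ∈ Tset) : Nonempty (c (j + 1) ≅ x) := by
  rcases hj.lt_or_eq with hj | rfl
  · have := (hc j hj).isIso_of_iso_mem e hx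
    exact ⟨asIso (tw.gmor j) ≪≫ e⟩
  · exact ⟨eqToIso tw.w_top.symm ≪≫ e⟩

lemma isZero_cobj_of_w_mem (hc : ∀ i < m, IsTCover Tset (tw.gmor i)) {j : ℕ} {x : C}
    (e : tw.w j ≅ x) (hx : x ∈ Tset) {i : ℕ} (hji : j + 1 < i) (him : i ≤ m + 1) :
    IsZero (c i) := by
  obtain ⟨k, rfl⟩ : ∃ k, i = k + 1 := ⟨i - 1, by omega⟩
  have := (hc j (by omega)).isIso_of_iso_mem e hx
  have hw : IsZero (tw.w (j + 1)) := Triangle.isZero₁_of_isIso₂ _ (tw.mem j (by omega)) this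
  exact tw.isZero_cobj_succ (by omega) (hc k) (tw.isZero_w_of_le hc (by omega) (by omega) hw)

end Tail

section HigherAngle

variable {d : ℕ} {c : ℕ → C} (tw : TriTower d c)

lemma hom_shift_w_eq_zero {X : C} {N : ℤ}
    (hc : ∀ i, 1 ≤ i → i ≤ d + 1 → ∀ m : ℤ, 1 ≤ m → m ≤ N → ∀ f : X ⟶ (c i)⟦m⟧, f = 0)
    {j : ℕ} (hj : j ≤ d) {m : ℤ} (hm : 1 ≤ m) (hmN : m ≤ N - d + j) (f : X ⟶ (tw.w j)⟦m⟧) :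
    f = 0 := by
  induction hj using Nat.decreasingInduction generalizing m with
  | self =>
    revert f
    rw [tw.w_top]
    exact hc (d + 1) (by omega) le_rfl m hm (by omega)
  | of_succ k hk ih =>
    exact hom_shift_obj₃_eq_zero_of_distTriang (tw.mem k hk) m
      (hc (k + 1) (by omega) (by omega) m hm (by omega))
      (ih (by omega) (by push_cast; omega)) f

lemma isTCover_gmor (hmem : ∀ i, 1 ≤ i → i ≤ d + 1 → c i ∈ Tset)
    (hvan : ∀ j, 1 ≤ j → j ≤ d → ∀ x ∈ Tset, ∀ f : x ⟶ (tw.w j)⟦(1 : ℤ)⟧, f = 0)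
    (hrad₁ : ∀ j : ℕ, j + 2 ≤ d → radMor (tw.gmor (j + 1) ≫ tw.fmor j))
    (hrad₂ : ∀ j : ℕ, (hj : j + 1 = d) →
      radMor ((eqToHom (show c (d + 1) = tw.w (j + 1) by rw [hj, tw.w_top]) :
        c (d + 1) ⟶ tw.w (j + 1)) ≫ tw.fmor j))
    {i : ℕ} (hi : i < d) : IsTCover Tset (tw.gmor i) := by
  refine isTCover_of_distTriang (tw.mem i hi) (hmem (i + 1) (by omega) (by omega))
    (fun x hx u => hvan (i + 1) (by omega) (by omega) x hx _) fun u => ?_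
  rcases Nat.lt_or_ge (i + 1) d with h | h
  · obtain ⟨(v : c (i + 1) ⟶ c (i + 2)), rfl⟩ :=
      Triangle.coyoneda_exact₃ _ (tw.mem (i + 1) h) u
        (hvan (i + 2) (by omega) (by omega) _ (hmem (i + 1) (by omega) (by omega)) _)
    have := (hrad₁ i (by omega)).isIso_id_sub_comp_left v
    rwa [← assoc] at this
  · obtain rfl : d = i + 1 := by omega
    simpa using (hrad₂ i rfl).isIso_id_sub_comp_left (u ≫ eqToHom tw.w_top)

end HigherAngle

end TriTower

end Pretriangulated

variable {C : Type u} [Category.{v} C]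

theorem stmt13 (k : Type*) [Field k] [Preadditive C] [CategoryTheory.Linear k C] [HasZeroObject C]
    [HasShift C ℤ] [∀ n : ℤ, (shiftFunctor C n).Additive] [Pretriangulated C]
    [HasFiniteBiproducts C] [IsIdempotentComplete C]
    [∀ X Y : C, FiniteDimensional k (X ⟶ Y)]
    (d : ℕ) (hd : 1 ≤ d) (t : C) (ht : IsClusterTiltingObj (2 * d) t)
    (Sset : Set C) (hS : IsClusterTiltingSub d Sset)
    (hSshift : ∀ s : C, s ∈ Sset ↔ s⟦(d : ℤ)⟧ ∈ Sset) (htS : t ∈ Sset)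
    {G : Type*} [AddCommGroup G] (cls indC indP : C → G)
    (hcls : IsAddOn {x : C | inAdd t x} cls)
    (hindC : IsIndex (2 * d) {x : C | inAdd t x} cls indC)
    (hindP : IsHigherIndex d {x : C | inAdd t x} Sset cls indP)
    (s : C) (hs : s ∈ Sset) : indP s = indC s := by
  set T := {x : C | inAdd t x}
  obtain ⟨c, tw, hc0, hmem, hrad₁, hrad₂, hP⟩ := hindP s hs
  obtain ⟨c₂, tw₂, hc₂0, hcov₂, htop₂, hC⟩ := hindC s
  have hcov : ∀ i < d, IsTCover T (tw.gmor i) := fun i hi =>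
    tw.isTCover_gmor hmem (fun j _ hj x hx f => tw.hom_shift_w_eq_zero
      (fun i h₁ h₂ _ hm₁ hm₂ => ht.hom_shift_eq_zero (hmem i h₁ h₂) hx hm₁ hm₂) hj le_rfl
      (by omega) f) hrad₁ hrad₂ hi
  have hcov₂' : ∀ i < d, IsTCover T (tw₂.gmor i) := fun i hi => hcov₂ i (by omega)
  have h0 : c 0 = c₂ 0 := hc0.trans hc₂0.symm
  obtain ⟨e⟩ := tw₂.nonempty_iso_w tw h0.symm (by omega) le_rfl hcov₂' hcov le_rfl
  have e' : tw₂.w d ≅ c (d + 1) := e ≪≫ eqToIso tw.w_top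
  have htop : c (d + 1) ∈ T := hmem (d + 1) (by omega) le_rfl
  have hiso : ∀ i ≤ d, Nonempty (c (i + 1) ≅ c₂ (i + 1)) := fun i hi => by
    rcases hi.lt_or_eq with hi | rfl
    · exact tw.nonempty_iso_cobj tw₂ h0 le_rfl (by omega) hcov hcov₂' hi
    · exact (tw₂.nonempty_iso_cobj_succ_of_w_mem hcov₂ (by omega) e' htop).map Iso.symm
  have hmem₂ : ∀ i < 2 * d, c₂ (i + 1) ∈ T := fun i hi =>
    if h : i < 2 * d - 1 then (hcov₂ i h).1 else by rwa [show i + 1 = 2 * d by omega]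
  rw [hP, hC]
  refine sum_range_eq_sum_range_of_eq_zero (by omega) (fun i hi => ?_) fun i hi₁ hi₂ => ?_
  · rw [hcls.1 _ _ (hmem (i + 1) (by omega) (by omega)) (hmem₂ i (by omega)) (hiso i (by omega))]
  · rw [hcls.eq_zero_of_isZero (fun _ => inAdd_of_isZero)
      (tw₂.isZero_cobj_of_w_mem hcov₂ e' htop (by omega) (by omega)), smul_zero]
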